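/- A₂ satisfies A₂ R₂ = R₂ Λ₂ with Λ₂ = diag(v−c, v, v, 0, v+c), where R₂ is the explicitly given eigenvector matrix. -/
import Mathlib

theorem A2_diagonalization (u v p rho alpha g c : ℝ) (hc : c ≠ 0) (hv : v^2 ≠ c^2)
    (A2 R2 L2 : Matrix (Fin 5) (Fin 5) ℝ)
    (hA2 : A2 = !![0, 0, 1, 0, 0;
                   -(u*v), v, u, 0, 0;
                   c^2 - v^2, 0, 2*v, p - rho*c^2, alpha*rho*g;
                   0, 0, 0, v, 0;
                   0, 0, 0, 0, 0])
    (hR2 : R2 = !![1, 0, rho*c^2 - p, alpha*rho*g, 1;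
                   u, 1, 0, u*(alpha*rho*g), u;
                   v - c, 0, v*(rho*c^2 - p), 0, v + c;
                   0, 0, c^2, 0, 0;
                   0, 0, 0, v^2 - c^2, 0])
    (hL2 : L2 = Matrix.diagonal ![v - c, v, v, 0, v + c]) :
    A2 * R2 = R2 * L2 := by
  subst hA2 hR2 hL2
  ext i j
  fin_cases i <;> fin_cases j <;>
    simp [Matrix.mul_apply, Fin.sum_univ_five, Matrix.diagonal, Matrix.vecHead, Matrix.vecTail] <;> ring
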